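/- arXiv:0902.0297 — 3 statements merged into one kernel-verified Lean document; each statement's English description precedes it below -/
import Mathlib

section
/- In a left adequate semigroup, for every element a and every idempotent e, ea⁺ = (ea)⁺. -/
/-- `a 𝓡* b` in a semigroup `S`: for all `x, y` in `S¹ = WithOne S`,
`x * a = y * a ↔ x * b = y * b`. -/
def RStar {S : Type*} [Semigroup S] (a b : S) : Prop :=
  ∀ x y : WithOne S, x * (a : WithOne S) = y * (a : WithOne S) ↔
    x * (b : WithOne S) = y * (b : WithOne S)

/-- A witness that the semigroup `S` is left adequate: every element `a` has an
idempotent `plus a` in its `𝓡*`-class, and idempotents commute. -/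
structure LeftAdequate (S : Type*) [Semigroup S] where
  plus : S → S
  plus_idem : ∀ a : S, IsIdempotentElem (plus a)
  plus_rstar : ∀ a : S, RStar a (plus a)
  idem_comm : ∀ e f : S, IsIdempotentElem e → IsIdempotentElem f → e * f = f * e


/-!
Write `p = a⁺` and `q = (ea)⁺`. Since `ep` is idempotent and `ea` is fixed by `ep` and by `q`, the
`𝓡*`-relations `a 𝓡* p` and `ea 𝓡* q` give `q(ep) = ep` and `(ep)q = q`; as the idempotents `ep`
and `q` commute, `ep = q`.
-/

namespace RStar

variable {S : Type*} [Semigroup S] {a b : S}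

theorem mul_eq_mul_iff (h : RStar a b) (x y : S) : x * a = y * a ↔ x * b = y * b := by
  simpa only [← WithOne.coe_mul, WithOne.coe_inj] using h x y

theorem mul_eq_self_iff (h : RStar a b) (x : S) : x * a = a ↔ x * b = b := by
  simpa only [← WithOne.coe_mul, one_mul, WithOne.coe_inj] using h x 1

end RStar

namespace LeftAdequate

variable {S : Type*} [Semigroup S] (L : LeftAdequate S)

theorem plus_mul_self (a : S) : L.plus a * a = a :=
  ((L.plus_rstar a).mul_eq_self_iff _).mpr (L.plus_idem a).eq

theorem isIdempotentElem_mul_plus {e : S} (he : IsIdempotentElem e) (a : S) :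
    IsIdempotentElem (e * L.plus a) :=
  he.mul_of_commute (L.idem_comm e _ he (L.plus_idem a)) (L.plus_idem a)

theorem mul_plus_mul_mul_self {e : S} (he : IsIdempotentElem e) (a : S) :
    e * L.plus a * (e * a) = e * a := by
  calc e * L.plus a * (e * a) = e * (L.plus a * e) * a := by simp only [mul_assoc]
    _ = e * e * (L.plus a * a) := by
        rw [← L.idem_comm e _ he (L.plus_idem a)]; simp only [mul_assoc]
    _ = e * a := by rw [he.eq, L.plus_mul_self]

end LeftAdequate

/-- In a left adequate semigroup, `e a⁺ = (ea)⁺` for every `a` and idempotent `e`. -/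
theorem idem_mul_plus {S : Type*} [Semigroup S] (L : LeftAdequate S) (a e : S)
    (he : IsIdempotentElem e) : e * L.plus a = L.plus (e * a) := by
  set p := L.plus a
  set q := L.plus (e * a)
  have hq_ep : q * (e * p) = e * p := by
    rw [← mul_assoc, ← (L.plus_rstar a).mul_eq_mul_iff, mul_assoc, L.plus_mul_self]
  have hep_q : e * p * q = q :=
    ((L.plus_rstar (e * a)).mul_eq_self_iff _).mp (L.mul_plus_mul_mul_self he a)
  calc e * p = q * (e * p) := hq_ep.symm
    _ = e * p * q := L.idem_comm _ _ (L.plus_idem _) (L.isIdempotentElem_mul_plus he a)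
    _ = q := hep_q
end

section
/- In any adequate monoid M, for elements B, C, x with B and C idempotent, the identity [B(xC)⁺x]* · (Bx)*C = (Bx)*C holds. -/
/-- `a 𝓡* b` in a monoid `M`: for all `x, y ∈ M`, `x a = y a ↔ x b = y b`. -/
def RStarM {M : Type*} [Monoid M] (a b : M) : Prop :=
  ∀ x y : M, x * a = y * a ↔ x * b = y * b

/-- `a 𝓛* b` in a monoid `M`: for all `x, y ∈ M`, `a x = a y ↔ b x = b y`. -/
def LStarM {M : Type*} [Monoid M] (a b : M) : Prop :=
  ∀ x y : M, a * x = a * y ↔ b * x = b * y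

/-- A witness that the monoid `M` is adequate: each element `a` has an idempotent
`plus a` in its `𝓡*`-class and an idempotent `star a` in its `𝓛*`-class, and
idempotents commute. -/
structure AdequateMonoid (M : Type*) [Monoid M] where
  plus : M → M
  star : M → M
  plus_idem : ∀ a : M, IsIdempotentElem (plus a)
  star_idem : ∀ a : M, IsIdempotentElem (star a)
  plus_rstar : ∀ a : M, RStarM a (plus a)
  star_lstar : ∀ a : M, LStarM a (star a)
  idem_comm : ∀ e f : M, IsIdempotentElem e → IsIdempotentElem f → e * f = f * e

/-!
Put `a = B (xC)⁺ x`. Since `(xC)⁺ xC = xC` we get `aC = BxC`, and as `s* e = (se)*` for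
idempotent `e`, this gives `a* C = (aC)* = (BxC)* = (Bx)* C`. Commuting the idempotents `a*`
and `(Bx)*` then turns `a* (Bx)* C` into `(Bx)* a* C = (Bx)* (Bx)* C = (Bx)* C`.
-/

theorem RStarM.mul_eq_self_of_isIdempotentElem {M : Type*} [Monoid M] {a e : M}
    (h : RStarM a e) (he : IsIdempotentElem e) : e * a = a := by
  simpa using (h e 1).mpr (by rw [he.eq, one_mul])

namespace LStarM

variable {M : Type*} [Monoid M] {a b c : M}

theorem symm (h : LStarM a b) : LStarM b a :=
  fun x y => (h x y).symm

theorem trans (hab : LStarM a b) (hbc : LStarM b c) : LStarM a c :=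
  fun x y => (hab x y).trans (hbc x y)

theorem mul_right (h : LStarM a b) (c : M) : LStarM (a * c) (b * c) := by
  intro x y
  simpa only [mul_assoc] using h (c * x) (c * y)

theorem mul_eq_self_of_isIdempotentElem (h : LStarM a b) (hb : IsIdempotentElem b) :
    a * b = a := by
  simpa using (h b 1).mpr (by rw [hb.eq, mul_one])

theorem eq_of_isIdempotentElem (h : LStarM a b) (ha : IsIdempotentElem a)
    (hb : IsIdempotentElem b) (hab : Commute a b) : a = b :=
  calc a = a * b := (h.mul_eq_self_of_isIdempotentElem hb).symm
    _ = b * a := hab.eq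
    _ = b := h.symm.mul_eq_self_of_isIdempotentElem ha

end LStarM

namespace AdequateMonoid

variable {M : Type*} [Monoid M] (D : AdequateMonoid M)

theorem plus_mul (a : M) : D.plus a * a = a :=
  (D.plus_rstar a).mul_eq_self_of_isIdempotentElem (D.plus_idem a)

theorem star_mul_of_isIdempotentElem (a : M) {e : M} (he : IsIdempotentElem e) :
    D.star a * e = D.star (a * e) := by
  have hstar_e : IsIdempotentElem (D.star a * e) :=
    .mul_of_commute (D.idem_comm _ _ (D.star_idem a) he) (D.star_idem a) he
  have hrel : LStarM (D.star a * e) (D.star (a * e)) :=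
    ((D.star_lstar a).mul_right e).symm.trans (D.star_lstar (a * e))
  exact hrel.eq_of_isIdempotentElem hstar_e (D.star_idem _)
    (D.idem_comm _ _ hstar_e (D.star_idem _))

end AdequateMonoid

theorem star_absorb_general {M : Type*} [Monoid M] (D : AdequateMonoid M) (B C x : M)
    (hC : IsIdempotentElem C) :
    D.star (B * D.plus (x * C) * x) * (D.star (B * x) * C) =
      D.star (B * x) * C := by
  set a := B * D.plus (x * C) * x
  have haC : a * C = B * x * C := by
    simp only [a, mul_assoc, D.plus_mul]
  have hstar_aC : D.star a * C = D.star (B * x) * C := by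
    rw [D.star_mul_of_isIdempotentElem a hC, haC, D.star_mul_of_isIdempotentElem (B * x) hC]
  calc D.star a * (D.star (B * x) * C)
      = D.star (B * x) * (D.star a * C) := by
        rw [← mul_assoc, D.idem_comm _ _ (D.star_idem a) (D.star_idem _), mul_assoc]
    _ = D.star (B * x) * C := by
        rw [hstar_aC, ← mul_assoc, (D.star_idem _).eq]

/-- In any adequate monoid, for idempotents `B, C` and any `x`,
`[B (xC)⁺ x]* · (Bx)* C = (Bx)* C`. -/
theorem star_absorb {M : Type*} [Monoid M] (D : AdequateMonoid M) (B C x : M)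
    (hB : IsIdempotentElem B) (hC : IsIdempotentElem C) :
    D.star (B * D.plus (x * C) * x) * (D.star (B * x) * C) =
      D.star (B * x) * C :=
  star_absorb_general D B C x hC
end

section
/- The identity (A(B⁺A)*)⁺B = A⁺B holds in every adequate monoid. -/
/-! With `e := B⁺` we have `e (A (eA)*) = eA`. For every idempotent `e`, `(e a)⁺ = e a⁺`: since `𝓡*`
is a left congruence, `e a 𝓡* e a⁺`, and `e a⁺` is idempotent because idempotents commute, while an
`𝓡*`-class contains at most one idempotent. Hence `e X⁺ = e A⁺` for `X := A (eA)*`, and since `e`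
commutes with `X⁺` and `A⁺` and `e B = B`, multiplying on the right by `B` gives `X⁺ B = A⁺ B`. -/

section RStar

variable {M : Type*} [Monoid M] {a b c : M}

theorem RStarM.symm (h : RStarM a b) : RStarM b a :=
  fun x y => (h x y).symm

theorem RStarM.trans (hab : RStarM a b) (hbc : RStarM b c) : RStarM a c :=
  fun x y => (hab x y).trans (hbc x y)

theorem RStarM.mul_left (h : RStarM a b) (c : M) : RStarM (c * a) (c * b) := by
  intro x y
  simp only [← mul_assoc]
  exact h (x * c) (y * c)

end RStar

namespace AdequateMonoid

variable {M : Type*} [Monoid M] (D : AdequateMonoid M)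

theorem mul_star (a : M) : a * D.star a = a := by
  simpa using ((D.star_lstar a (D.star a) 1).mpr (by simpa using (D.star_idem a).eq))

theorem eq_of_rstarM (D : AdequateMonoid M) {e f : M} (he : IsIdempotentElem e)
    (hf : IsIdempotentElem f) (h : RStarM e f) : e = f := by
  have hef : e * f = f := by simpa using (h e 1).mp (by simpa using he.eq)
  have hfe : f * e = e := by simpa using (h f 1).mpr (by simpa using hf.eq)
  calc e = f * e := hfe.symm
    _ = e * f := (D.idem_comm e f he hf).symm
    _ = f := hef

theorem plus_idem_mul {e : M} (he : IsIdempotentElem e) (a : M) :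
    D.plus (e * a) = e * D.plus a :=
  D.eq_of_rstarM (D.plus_idem _) (he.mul_of_commute (D.idem_comm _ _ he (D.plus_idem a))
      (D.plus_idem a))
    ((D.plus_rstar (e * a)).symm.trans ((D.plus_rstar a).mul_left e))

end AdequateMonoid

/-- The identity `(A (B⁺ A)*)⁺ B = A⁺ B` holds in every adequate monoid. -/
theorem adequate_identity {M : Type*} [Monoid M] (D : AdequateMonoid M) (A B : M) :
    D.plus (A * D.star (D.plus B * A)) * B = D.plus A * B := by
  set e := D.plus B
  set X := A * D.star (e * A)
  have he : IsIdempotentElem e := D.plus_idem B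
  have heX : e * X = e * A := by rw [← mul_assoc, D.mul_star]
  have hplus : e * D.plus X = e * D.plus A := by
    rw [← D.plus_idem_mul he, heX, D.plus_idem_mul he]
  calc D.plus X * B = D.plus X * e * B := by rw [mul_assoc, D.plus_mul]
    _ = e * D.plus A * B := by rw [D.idem_comm _ _ (D.plus_idem X) he, hplus]
    _ = D.plus A * B := by rw [← D.idem_comm _ _ (D.plus_idem A) he, mul_assoc, D.plus_mul]
end
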